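/- arXiv:math/0702182 — 3 statements merged into one kernel-verified Lean document; each statement's English description precedes it below -/
import Mathlib

section
/- Let q be a prime, let G be a transitive permutation group on a finite set Ω of size mq admitting a G-invariant partition B of Ω, and let H be a subgroup of G having exactly m orbits on Ω, each of length q. Let S be an orbit of H and let B ∈ B satisfy B ∩ S ≠ ∅. Then either (i) |B ∩ S| = 1, and in this case |B ∩ S'| = 1 for every orbit S' of H meeting B, or (ii) S ⊆ B, and in this case q divides |B|. -/
open SimpleGraph

/-- A graph is vertex-transitive if any vertex can be mapped to any other by an automorphism. -/
def SimpleGraph.IsVertexTransitive {V : Type*} (X : SimpleGraph V) : Prop :=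
  ∀ u v : V, ∃ φ : X ≃g X, φ u = v

/-- A graph has a Hamilton path if some walk visits every vertex exactly once. -/
def SimpleGraph.HasHamiltonianPath {V : Type*} [DecidableEq V] (X : SimpleGraph V) : Prop :=
  ∃ (u v : V) (w : X.Walk u v), w.IsHamiltonian

/-- A graph has a Hamilton cycle if some closed walk is a Hamiltonian cycle. -/
def SimpleGraph.HasHamiltonianCycle {V : Type*} [DecidableEq V] (X : SimpleGraph V) : Prop :=
  ∃ (u : V) (w : X.Walk u u), w.IsHamiltonianCycle

/-- A subgroup of the automorphism group acts transitively on the vertices. -/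
def SimpleGraph.IsTransitiveSubgroup {V : Type*} (X : SimpleGraph V)
    (G : Subgroup (X ≃g X)) : Prop :=
  ∀ u v : V, ∃ g ∈ G, g u = v

/-- The orbit of a vertex under a subgroup of the automorphism group. -/
def SimpleGraph.autOrbit {V : Type*} (X : SimpleGraph V) (N : Subgroup (X ≃g X))
    (v : V) : Set V :=
  {w | ∃ g ∈ N, g v = w}

/-- `N` is a subgroup of `G` which is normal in `G`. -/
def SimpleGraph.IsNormalIn {V : Type*} (X : SimpleGraph V)
    (N G : Subgroup (X ≃g X)) : Prop :=
  N ≤ G ∧ ∀ g ∈ G, ∀ n ∈ N, g * n * g⁻¹ ∈ N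

/-- `N` is a minimal normal subgroup of the (subgroup) `G`: it is a nontrivial normal
subgroup of `G` and the only normal subgroups of `G` contained in it are `⊥` and `N`. -/
def SimpleGraph.IsMinimalNormalIn {V : Type*} (X : SimpleGraph V)
    (N G : Subgroup (X ≃g X)) : Prop :=
  X.IsNormalIn N G ∧ N ≠ ⊥ ∧
    ∀ M : Subgroup (X ≃g X), X.IsNormalIn M G → M ≤ N → M = ⊥ ∨ M = N

/-- An automorphism `ρ` is `(m,n)`-semiregular if the cyclic group it generates has exactly
`m` orbits on the vertex set, each of size `n`. -/
def SimpleGraph.IsSemiregular {V : Type*} (X : SimpleGraph V) (ρ : X ≃g X)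
    (m n : ℕ) : Prop :=
  (∀ v : V, (X.autOrbit (Subgroup.zpowers ρ) v).ncard = n) ∧
    {S : Set V | ∃ v, S = X.autOrbit (Subgroup.zpowers ρ) v}.ncard = m

/-- The quotient graph of `X` corresponding to a partition `P` of its vertex set. -/
def SimpleGraph.quotientGraph {V : Type*} (X : SimpleGraph V) (P : Set (Set V)) :
    SimpleGraph ↥P where
  Adj A B := A ≠ B ∧ ∃ a ∈ (A : Set V), ∃ b ∈ (B : Set V), X.Adj a b
  symm := ⟨by
    rintro A B ⟨hne, a, ha, b, hb, hab⟩
    exact ⟨hne.symm, b, hb, a, ha, hab.symm⟩⟩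
  loopless := ⟨fun A h => h.1 rfl⟩

/-- The Petersen graph: vertices are the 2-element subsets of a 5-element set, adjacent
when disjoint. -/
def PetersenGraph : SimpleGraph {s : Finset (Fin 5) // s.card = 2} where
  Adj s t := Disjoint (s : Finset (Fin 5)) (t : Finset (Fin 5))
  symm := ⟨fun _ _ h => h.symm⟩
  loopless := ⟨fun s h => by
    have hs : (s : Finset (Fin 5)) = ⊥ := disjoint_self.mp h
    have h2 := s.2
    rw [hs] at h2
    simp at h2⟩

/-- The truncation of a graph `Y`: vertices are incident vertex-edge pairs, two pairs being
adjacent iff they share the vertex but not the edge, or share the edge but not the vertex. -/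
def SimpleGraph.truncation {W : Type*} (Y : SimpleGraph W) :
    SimpleGraph {ve : W × Y.edgeSet // ve.1 ∈ (ve.2 : Sym2 W)} where
  Adj a b := (a.1.1 = b.1.1 ∧ a.1.2 ≠ b.1.2) ∨ (a.1.2 = b.1.2 ∧ a.1.1 ≠ b.1.1)
  symm := ⟨by
    rintro a b (⟨h1, h2⟩ | ⟨h1, h2⟩)
    · exact Or.inl ⟨h1.symm, h2.symm⟩
    · exact Or.inr ⟨h1.symm, h2.symm⟩⟩
  loopless := ⟨fun a h => by rcases h with ⟨_, h⟩ | ⟨_, h⟩ <;> exact h rfl⟩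

/-- A graph is genuinely imprimitive if some transitive subgroup of its automorphism group
has a nontrivial intransitive normal subgroup. -/
def SimpleGraph.IsGenuinelyImprimitive {V : Type*} (X : SimpleGraph V) : Prop :=
  ∃ G N : Subgroup (X ≃g X), X.IsTransitiveSubgroup G ∧ X.IsNormalIn N G ∧
    N ≠ ⊥ ∧ ¬ X.IsTransitiveSubgroup N

/-- A partition of the vertex set invariant under a subgroup of automorphisms. -/
def SimpleGraph.IsInvariantPartition {V : Type*} (X : SimpleGraph V)
    (G : Subgroup (X ≃g X)) (P : Set (Set V)) : Prop :=
  Setoid.IsPartition P ∧ ∀ g ∈ G, ∀ B ∈ P, (g : X ≃g X) '' B ∈ P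

/-- A graph is quasiprimitive if some transitive subgroup of its automorphism group preserves
a nontrivial partition of the vertex set, but no transitive subgroup of the automorphism
group has a nontrivial intransitive normal subgroup. -/
def SimpleGraph.IsQuasiprimitive {V : Type*} (X : SimpleGraph V) : Prop :=
  (∃ G : Subgroup (X ≃g X), X.IsTransitiveSubgroup G ∧
    ∃ P : Set (Set V), X.IsInvariantPartition G P ∧
      P ≠ Set.range (fun v => ({v} : Set V)) ∧ P ≠ {Set.univ}) ∧
  ¬ X.IsGenuinelyImprimitive

/-- A graph is primitive if every transitive subgroup of its automorphism group preserves
only the trivial partitions of the vertex set. -/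
def SimpleGraph.IsPrimitiveGraph {V : Type*} (X : SimpleGraph V) : Prop :=
  ∀ G : Subgroup (X ≃g X), X.IsTransitiveSubgroup G →
    ∀ P : Set (Set V), X.IsInvariantPartition G P →
      P = Set.range (fun v => ({v} : Set V)) ∨ P = {Set.univ}

/-!
Each part `B` of the partition is a block for `H`. Its trace on an `H`-orbit `S` is a block
for the transitive action of `H` on `S`, so `|B ∩ S|` divides the prime `|S| = q`: either
`B ∩ S` is a point or `S ⊆ B`. A block containing a whole orbit is fixed by `H`, hence a union
of `H`-orbits of size `q`; so it meets no orbit in a single point, and `q ∣ |B|`.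
-/

open Pointwise

namespace MulAction

variable {G X : Type*} [Group G] [MulAction G X] {B : Set X}

theorem IsBlockSystem.of_isPartition {P : Set (Set X)} (hP : Setoid.IsPartition P)
    (hsmul : ∀ g : G, ∀ B ∈ P, g • B ∈ P) : IsBlockSystem G P := by
  refine ⟨hP, fun B hB => isBlock_iff_smul_eq_of_nonempty.mpr fun g ⟨x, hgx, hx⟩ => ?_⟩
  exact Setoid.eq_of_mem_eqv_class hP.2 (hsmul g B hB) hgx hB hx

theorem IsBlock.ncard_inter_orbit_dvd (hB : IsBlock G B) {a : X}
    (hBa : (B ∩ orbit G a).Nonempty) : (B ∩ orbit G a).ncard ∣ (orbit G a).ncard := by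
  let ι : orbit G a →[G] X := ⟨Subtype.val, fun _ _ => rfl⟩
  have hι : (ι ⁻¹' B).ncard = (B ∩ orbit G a).ncard := by
    rw [← Set.ncard_image_of_injective _ Subtype.val_injective, Set.inter_comm]
    exact congrArg Set.ncard (Subtype.image_preimage_coe _ _)
  rw [← hι, ← Nat.card_coe_set_eq]
  refine (hB.preimage ι).ncard_dvd_card ?_
  obtain ⟨x, hxB, hx⟩ := hBa
  exact ⟨⟨x, hx⟩, hxB⟩

theorem IsBlock.ncard_inter_orbit_eq_one_or_orbit_subset (hB : IsBlock G B) {a : X}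
    (hprime : (orbit G a).ncard.Prime) (hBa : (B ∩ orbit G a).Nonempty) :
    (B ∩ orbit G a).ncard = 1 ∨ orbit G a ⊆ B := by
  refine (hprime.eq_one_or_self_of_dvd _ (hB.ncard_inter_orbit_dvd hBa)).imp id fun h => ?_
  have hfin : (orbit G a).Finite := Set.finite_of_ncard_pos hprime.pos
  exact Set.inter_eq_right.mp (Set.eq_of_subset_of_ncard_le Set.inter_subset_right h.ge hfin)

theorem IsBlock.isFixedBlock_of_orbit_subset (hB : IsBlock G B) {a : X}
    (ha : orbit G a ⊆ B) : IsFixedBlock G B := fun g =>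
  hB.smul_eq_of_mem (ha (mem_orbit_self a)) (ha (mem_orbit a g))

theorem IsFixedBlock.orbit_subset (hB : IsFixedBlock G B) {a : X} (ha : a ∈ B) :
    orbit G a ⊆ B := by
  rintro _ ⟨g, rfl⟩
  rw [← hB g]
  exact Set.smul_mem_smul_set ha

theorem dvd_card_of_forall_card_orbit_eq [Finite X] {q : ℕ}
    (horbit : ∀ x : X, Nat.card (orbit G x) = q) : q ∣ Nat.card X := by
  have := Fintype.ofFinite (orbitRel.Quotient G X)
  rw [Nat.card_congr (selfEquivSigmaOrbits G X), Nat.card_sigma]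
  exact Finset.dvd_sum fun ω _ => dvd_of_eq (horbit ω.out).symm

theorem IsFixedBlock.dvd_ncard (hB : IsFixedBlock G B) {q : ℕ}
    (horbit : ∀ x ∈ B, (orbit G x).ncard = q) : q ∣ B.ncard := by
  obtain hinf | hfin := B.infinite_or_finite
  · simp [hinf.ncard]
  let N : SubMulAction G X := ⟨B, fun g x hx => hB g ▸ Set.smul_mem_smul_set hx⟩
  have : Finite N := hfin
  rw [← Nat.card_coe_set_eq]
  refine dvd_card_of_forall_card_orbit_eq (G := G) (X := N) fun x => ?_
  rw [← horbit x x.2, ← SubMulAction.val_image_orbit,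
    Set.ncard_image_of_injective _ Subtype.val_injective, Nat.card_coe_set_eq]

end MulAction

open MulAction

theorem block_orbit_intersection_general
    {Ω : Type*} (q : ℕ) (hq : q.Prime)
    (G : Subgroup (Equiv.Perm Ω))
    (P : Set (Set Ω)) (hP : Setoid.IsPartition P)
    (hinv : ∀ g ∈ G, ∀ B ∈ P, (⇑g) '' B ∈ P)
    (H : Subgroup (Equiv.Perm Ω)) (hHG : H ≤ G)
    (horb : ∀ ω : Ω, (MulAction.orbit H ω).ncard = q)
    (S : Set Ω) (hS : ∃ ω, S = MulAction.orbit H ω)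
    (B : Set Ω) (hB : B ∈ P) (hBS : (B ∩ S).Nonempty) :
    ((B ∩ S).ncard = 1 ∧ ∀ S' : Set Ω, (∃ ω, S' = MulAction.orbit H ω) →
        (B ∩ S').Nonempty → (B ∩ S').ncard = 1) ∨
      (S ⊆ B ∧ q ∣ B.ncard) := by
  have hblock : IsBlock H B :=
    (IsBlockSystem.of_isPartition (G := H) hP fun h B hB => hinv h (hHG h.prop) B hB).2 hB
  have hdich : ∀ ω, (B ∩ orbit H ω).Nonempty → (B ∩ orbit H ω).ncard = 1 ∨ orbit H ω ⊆ B :=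
    fun ω => hblock.ncard_inter_orbit_eq_one_or_orbit_subset (horb ω ▸ hq)
  obtain ⟨ω, rfl⟩ := hS
  obtain hone | hsub := hdich ω hBS
  · refine .inl ⟨hone, ?_⟩
    rintro _ ⟨ω', rfl⟩ hBS'
    refine (hdich ω' hBS').resolve_right fun hsub' => hq.one_lt.ne' ?_
    obtain ⟨s, hsB, hs⟩ := hBS
    have hsub : orbit H ω ⊆ B := orbit_eq_iff.mpr hs ▸
      (hblock.isFixedBlock_of_orbit_subset hsub').orbit_subset hsB
    rwa [Set.inter_eq_right.mpr hsub, horb] at hone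
  · exact .inr ⟨hsub, (hblock.isFixedBlock_of_orbit_subset hsub).dvd_ncard fun x _ => horb x⟩

theorem block_orbit_intersection
    {Ω : Type*} [Fintype Ω] (q m : ℕ) (hq : q.Prime)
    (hcard : Fintype.card Ω = m * q)
    (G : Subgroup (Equiv.Perm Ω)) (hG : ∀ a b : Ω, ∃ g ∈ G, g a = b)
    (P : Set (Set Ω)) (hP : Setoid.IsPartition P)
    (hinv : ∀ g ∈ G, ∀ B ∈ P, (⇑g) '' B ∈ P)
    (H : Subgroup (Equiv.Perm Ω)) (hHG : H ≤ G)
    (horb : ∀ ω : Ω, (MulAction.orbit H ω).ncard = q)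
    (hm : {S : Set Ω | ∃ ω, S = MulAction.orbit H ω}.ncard = m)
    (S : Set Ω) (hS : ∃ ω, S = MulAction.orbit H ω)
    (B : Set Ω) (hB : B ∈ P) (hBS : (B ∩ S).Nonempty) :
    ((B ∩ S).ncard = 1 ∧ ∀ S' : Set Ω, (∃ ω, S' = MulAction.orbit H ω) →
        (B ∩ S').Nonempty → (B ∩ S').ncard = 1) ∨
      (S ⊆ B ∧ q ∣ B.ncard) :=
  block_orbit_intersection_general q hq G P hP hinv H hHG horb S hS B hB hBS
end

section
/- Let p be a prime, let G be a finite group acting on a finite set Ω, let P be a Sylow p-subgroup of G, and let ω ∈ Ω. If p^m divides the cardinality of the G-orbit of ω, then p^m also divides the cardinality of the P-orbit of ω. -/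
open SimpleGraph

theorem Sylow.pow_dvd_relIndex_of_pow_dvd_index {G : Type*} [Group G] {p : ℕ} [Fact p.Prime]
    (P : Sylow p G) [P.FiniteIndex] {H : Subgroup G} {m : ℕ} (h : p ^ m ∣ H.index) :
    p ^ m ∣ H.relIndex P := by
  have hcop : (p ^ m).Coprime (P : Subgroup G).index :=
    Nat.Coprime.pow_left m ((Nat.Prime.coprime_iff_not_dvd Fact.out).2 P.not_dvd_index)
  have hdvd : H.index ∣ H.relIndex P * (P : Subgroup G).index := by
    rw [← Subgroup.inf_relIndex_right, Subgroup.relIndex_mul_index inf_le_right]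
    exact Subgroup.index_dvd_of_le inf_le_left
  exact hcop.dvd_of_dvd_mul_right (h.trans hdvd)

theorem MulAction.card_orbit_subgroup_eq_relIndex {G : Type*} [Group G] {Ω : Type*}
    [MulAction G Ω] (K : Subgroup G) (ω : Ω) :
    Nat.card (orbit K ω) = (stabilizer G ω).relIndex K := by
  have hstab : stabilizer K ω = (stabilizer G ω).subgroupOf K := by
    ext; simp [Subgroup.mem_subgroupOf, Subgroup.smul_def]
  rw [Nat.card_coe_set_eq, ← index_stabilizer, hstab, Subgroup.relIndex]

theorem pow_prime_dvd_sylow_orbit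
    {G : Type*} [Group G] [Fintype G] {Ω : Type*} [MulAction G Ω]
    (p m : ℕ) (hp : p.Prime) (P : Sylow p G) (ω : Ω)
    (h : p ^ m ∣ Nat.card (MulAction.orbit G ω)) :
    p ^ m ∣ Nat.card (MulAction.orbit (P : Subgroup G) ω) := by
  have : Fact p.Prime := ⟨hp⟩
  rw [Nat.card_coe_set_eq, ← MulAction.index_stabilizer] at h
  rw [MulAction.card_orbit_subgroup_eq_relIndex]
  exact P.pow_dvd_relIndex_of_pow_dvd_index h
end

section
/- Let p be a prime, let m < p be a positive integer, let X be a vertex-transitive finite simple graph on mp vertices, and let G be a transitive subgroup of the automorphism group of X. Then G contains an (m,p)-semiregular automorphism of X. -/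
open SimpleGraph

/-!
Since `m < p`, the prime `p` divides `|V|` exactly once, so every orbit of a Sylow `p`-subgroup
`P` of `G` has size `p` and there are `m < p` of them. Point stabilizers in `P` have index `p`,
hence are normal and constant along `P`-orbits; fewer than `p` subgroups of index `p` cannot
cover `P`, so some `ρ ∈ P` fixes no vertex. The orbits of `⟨ρ⟩` are then exactly the
`P`-orbits.
-/

open MulAction
open scoped Pointwise

namespace IsPGroup

variable {p : ℕ} {G : Type*} [Group G] [Finite G]

theorem normal_of_index_eq_prime [hp : Fact p.Prime] (hG : IsPGroup p G) {H : Subgroup G}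
    (hH : H.index = p) : H.Normal := by
  obtain ⟨n, hn⟩ := IsPGroup.iff_card.mp hG
  have hn0 : n ≠ 0 := by
    rintro rfl
    rw [pow_zero, ← Subgroup.index_bot] at hn
    exact hp.out.ne_one (hH ▸ Nat.eq_one_of_dvd_one (hn ▸ Subgroup.index_dvd_of_le bot_le))
  exact Subgroup.normal_of_index_eq_minFac_card (by rw [hn, hp.out.pow_minFac hn0, hH])

end IsPGroup

namespace MulAction

variable {G α : Type*} [Group G] [MulAction G α]

theorem stabilizer_smul_eq_of_normal (g : G) (a : α) [(stabilizer G a).Normal] :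
    stabilizer G (g • a) = stabilizer G a := by
  rw [stabilizer_smul_eq_stabilizer_map_conj]
  exact Subgroup.Normal.map_conj_eq _ g

theorem card_eq_card_orbitRel_quotient_mul [Finite α] {n : ℕ}
    (h : ∀ a : α, (orbit G a).ncard = n) :
    Nat.card α = Nat.card (orbitRel.Quotient G α) * n := by
  have : Fintype (orbitRel.Quotient G α) := Fintype.ofFinite _
  rw [Nat.card_congr (selfEquivSigmaOrbits' G α), Nat.card_sigma, Nat.card_eq_fintype_card,
    ← Finset.card_univ, ← smul_eq_mul, ← Finset.sum_const]
  refine Finset.sum_congr rfl fun ω _ => ?_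
  rw [Nat.card_coe_set_eq, orbitRel.Quotient.orbit_eq_orbit_out ω Quotient.out_eq', h]

theorem ncard_setOf_orbit :
    {S : Set α | ∃ a, S = orbit G a}.ncard = Nat.card (orbitRel.Quotient G α) := by
  have : {S : Set α | ∃ a, S = orbit G a} =
      Set.range (orbitRel.Quotient.orbit : orbitRel.Quotient G α → Set α) := by
    ext S
    constructor
    · rintro ⟨a, rfl⟩
      exact ⟨Quotient.mk'' a, rfl⟩
    · rintro ⟨ω, rfl⟩
      exact ⟨ω.out, orbitRel.Quotient.orbit_eq_orbit_out ω Quotient.out_eq'⟩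
  rw [this, ← Nat.card_coe_set_eq, Nat.card_range_of_injective orbitRel.Quotient.orbit_injective]

theorem mem_orbit_zpowers_iff {g : G} {a b : α} :
    b ∈ orbit (Subgroup.zpowers g) a ↔ ∃ k : ℤ, g ^ k • a = b :=
  ⟨fun ⟨⟨_, k, rfl⟩, h⟩ => ⟨k, h⟩, fun ⟨k, h⟩ => ⟨⟨g ^ k, k, rfl⟩, h⟩⟩

theorem orbit_zpowers_subtype {H : Subgroup G} (g : H) (a : α) :
    orbit (Subgroup.zpowers (g : G)) a = orbit (Subgroup.zpowers g) a := by
  ext b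
  simp only [mem_orbit_zpowers_iff, Subgroup.smul_def, SubgroupClass.coe_zpow]

theorem orbit_zpowers_eq_of_smul_ne {p : ℕ} [hp : Fact p.Prime] {H : Subgroup G}
    (hH : IsPGroup p H) {g : G} (hg : g ∈ H) {a : α} (horb : (orbit H a).ncard = p)
    (hga : g • a ≠ a) : orbit (Subgroup.zpowers g) a = orbit H a := by
  have hsub : orbit (Subgroup.zpowers g) a ⊆ orbit H a := fun b hb => by
    obtain ⟨k, rfl⟩ := mem_orbit_zpowers_iff.mp hb
    exact mem_orbit a (⟨g ^ k, zpow_mem hg k⟩ : H)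
  have hfin : (orbit H a).Finite := Set.finite_of_ncard_ne_zero (horb ▸ hp.out.ne_zero)
  have : Finite (orbit (Subgroup.zpowers g) a) := (hfin.subset hsub).to_subtype
  obtain ⟨n, hn⟩ := (hH.to_le (Subgroup.zpowers_le.mpr hg)).card_orbit a
  rw [Nat.card_coe_set_eq] at hn
  have hn0 : n ≠ 0 := by
    rintro rfl
    have : 1 < (orbit (Subgroup.zpowers g) a).ncard := (Set.one_lt_ncard_iff).mpr
      ⟨g • a, a, mem_orbit a (⟨g, Subgroup.mem_zpowers g⟩ : Subgroup.zpowers g),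
        mem_orbit_self a, hga⟩
    rw [hn, pow_zero] at this
    exact this.false
  refine Set.eq_of_subset_of_ncard_le hsub ?_ hfin
  rw [horb, hn]
  exact Nat.le_self_pow hn0 p

end MulAction

theorem IsPGroup.exists_forall_smul_ne {p : ℕ} {G α : Type*} [Group G] [MulAction G α]
    [Finite G] [Finite α] [hp : Fact p.Prime] (hG : IsPGroup p G)
    (horb : ∀ a : α, (orbit G a).ncard = p) (hlt : Nat.card (orbitRel.Quotient G α) < p) :
    ∃ g : G, ∀ a : α, g • a ≠ a := by
  have : Fintype (orbitRel.Quotient G α) := Fintype.ofFinite _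
  have hnormal (a : α) : (stabilizer G a).Normal :=
    hG.normal_of_index_eq_prime ((index_stabilizer G a).trans (horb a))
  by_contra! hfix
  have hcover : ⋃ ω ∈ (Finset.univ : Finset (orbitRel.Quotient G α)),
      (1 : G) • (stabilizer G ω.out : Set G) = Set.univ := by
    refine Set.eq_univ_of_forall fun g => ?_
    obtain ⟨a, ha⟩ := hfix g
    obtain ⟨h, hh⟩ : (Quotient.mk'' a : orbitRel.Quotient G α).out ∈ orbit G a :=
      orbitRel.Quotient.mem_orbit.mpr (Quotient.out_eq' (Quotient.mk'' a))
    have := hnormal a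
    simp only [Set.mem_iUnion, one_smul, SetLike.mem_coe]
    exact ⟨_, Finset.mem_univ _, by rw [← hh, stabilizer_smul_eq_of_normal]; exact ha⟩
  have hsum := Subgroup.one_le_sum_inv_index_of_leftCoset_cover hcover
  simp only [index_stabilizer, horb, Finset.sum_const, Finset.card_univ, nsmul_eq_mul,
    ← Nat.card_eq_fintype_card, ← div_eq_mul_inv] at hsum
  rw [one_le_div (by exact_mod_cast hp.out.pos)] at hsum
  exact hlt.not_ge (by exact_mod_cast hsum)

namespace Sylow

variable {p : ℕ} [hp : Fact p.Prime] {G α : Type*} [Group G] [Finite G] [MulAction G α]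
  [Finite α] [IsPretransitive G α]

theorem dvd_ncard_orbit (P : Sylow p G) (hdvd : p ∣ Nat.card α) (a : α) :
    p ∣ (orbit P a).ncard := by
  obtain ⟨n, hn⟩ := P.isPGroup'.card_orbit a
  rw [← Nat.card_coe_set_eq, hn]
  rcases n with _ | n
  · have : Subsingleton (orbit P a) := (Nat.card_eq_one_iff_unique.mp hn).1
    have hfix : (P : Subgroup G) ≤ stabilizer G a := fun g hg =>
      mem_stabilizer_iff.mpr <| congrArg Subtype.val <|
        Subsingleton.elim (⟨_, mem_orbit a ⟨g, hg⟩⟩ : orbit P a) ⟨a, mem_orbit_self a⟩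
    rw [← index_stabilizer_of_transitive G a] at hdvd
    exact absurd (hdvd.trans (Subgroup.index_dvd_of_le hfix)) P.not_dvd_index
  · exact dvd_pow_self p n.succ_ne_zero

theorem ncard_orbit_eq_of_card_eq_mul (P : Sylow p G) {m : ℕ} (hα : Nat.card α = m * p)
    (hmp : m < p) (a : α) : (orbit P a).ncard = p := by
  obtain ⟨n, hn⟩ := P.isPGroup'.card_orbit a
  rw [Nat.card_coe_set_eq] at hn
  have hlt : p ^ n < p ^ 2 :=
    calc p ^ n = (orbit P a).ncard := hn.symm
      _ ≤ m * p := hα ▸ Set.ncard_le_card _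
      _ < p ^ 2 := by rw [sq]; exact Nat.mul_lt_mul_of_pos_right hmp hp.out.pos
  have hle : n ≤ 1 := Nat.lt_succ_iff.mp ((Nat.pow_lt_pow_iff_right hp.out.one_lt).mp hlt)
  refine Nat.dvd_antisymm ?_ (P.dvd_ncard_orbit (hα ▸ dvd_mul_left p m) a)
  rw [hn]
  exact (Nat.pow_dvd_pow p hle).trans (pow_one p).dvd

end Sylow

theorem MulAction.exists_semiregular_of_card_eq_mul_prime {p m : ℕ} {G α : Type*} [Group G]
    [MulAction G α] [Finite G] [Finite α] [IsPretransitive G α] [hp : Fact p.Prime] (hmp : m < p)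
    (hα : Nat.card α = m * p) :
    ∃ ρ : G, (∀ a : α, (orbit (Subgroup.zpowers ρ) a).ncard = p) ∧
      {S : Set α | ∃ a, S = orbit (Subgroup.zpowers ρ) a}.ncard = m := by
  let P : Sylow p G := default
  have horb := P.ncard_orbit_eq_of_card_eq_mul hα hmp
  have hcount : Nat.card (orbitRel.Quotient P α) = m := Nat.eq_of_mul_eq_mul_right hp.out.pos <|
    (card_eq_card_orbitRel_quotient_mul horb).symm.trans hα
  obtain ⟨g, hg⟩ := P.isPGroup'.exists_forall_smul_ne horb (hcount ▸ hmp)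
  have hzpowers (a : α) : orbit (Subgroup.zpowers (g : G)) a = orbit P a :=
    orbit_zpowers_eq_of_smul_ne P.isPGroup' g.2 (horb a) (hg a)
  refine ⟨g, fun a => by rw [hzpowers, horb], ?_⟩
  simp only [hzpowers]
  rw [ncard_setOf_orbit, hcount]

namespace SimpleGraph

variable {V : Type*} (X : SimpleGraph V)

instance Iso.applyMulAction : MulAction (X ≃g X) V where
  smul φ v := φ v
  one_smul _ := rfl
  mul_smul _ _ _ := rfl

theorem autOrbit_eq_orbit (N : Subgroup (X ≃g X)) (v : V) : X.autOrbit N v = orbit N v := by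
  ext w
  exact ⟨fun ⟨g, hg, h⟩ => ⟨⟨g, hg⟩, h⟩, fun ⟨g, h⟩ => ⟨g, g.2, h⟩⟩

end SimpleGraph

theorem exists_semiregular_in_transitive_subgroup_general
    {V : Type*} [Fintype V] (p m : ℕ) (hp : p.Prime) (hmp : m < p)
    (X : SimpleGraph V) (hcard : Fintype.card V = m * p)
    (G : Subgroup (X ≃g X)) (hG : X.IsTransitiveSubgroup G) :
    ∃ ρ ∈ G, X.IsSemiregular ρ m p := by
  have : Fact p.Prime := ⟨hp⟩
  have : Finite (X ≃g X) := Finite.of_injective _ RelIso.toEquiv_injective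
  have : IsPretransitive G V := ⟨fun u v => let ⟨g, hg, h⟩ := hG u v; ⟨⟨g, hg⟩, h⟩⟩
  obtain ⟨ρ, horb, hcount⟩ :=
    exists_semiregular_of_card_eq_mul_prime (G := G) hmp (hcard ▸ Nat.card_eq_fintype_card)
  refine ⟨ρ, ρ.2, ?_, ?_⟩ <;> simpa only [X.autOrbit_eq_orbit, orbit_zpowers_subtype]

theorem exists_semiregular_in_transitive_subgroup
    {V : Type*} [Fintype V] (p m : ℕ) (hp : p.Prime) (hm : 0 < m) (hmp : m < p)
    (X : SimpleGraph V) (hcard : Fintype.card V = m * p)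
    (hvt : X.IsVertexTransitive)
    (G : Subgroup (X ≃g X)) (hG : X.IsTransitiveSubgroup G) :
    ∃ ρ ∈ G, X.IsSemiregular ρ m p :=
  exists_semiregular_in_transitive_subgroup_general p m hp hmp X hcard G hG
end
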